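/- Let M be an imprimitivity Hilbert C*-bimodule over unital C*-algebras A and B with canonical isomorphism φ_M: A → B, and let I ⊆ A be a closed involutive ideal. Then IM = M·φ_M(I), and the quotient M/(IM) is an imprimitivity Hilbert C*-bimodule over A/I and B/φ_M(I). -/

import Mathlib

/-- A pre-Hilbert C*-bimodule `M` over unital C*-algebras `A` (on the left) and
`B` (on the right): a left pre-Hilbert C*-module over `A` (inner product `innerL`,
`A`-linear in the first variable) and a right pre-Hilbert C*-module over `B`
(inner product `innerR`, `B`-linear in the second variable), with compatible
actions. -/
structure PreHilbertBimodule (A B M : Type*) [CStarAlgebra A] [CStarAlgebra B]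
    [AddCommGroup M] [Module ℂ M] where
  lsmul : A → M → M
  rsmul : M → B → M
  innerL : M → M → A
  innerR : M → M → B
  lsmul_dist : ∀ a x y, lsmul a (x + y) = lsmul a x + lsmul a y
  add_lsmul : ∀ a b x, lsmul (a + b) x = lsmul a x + lsmul b x
  mul_lsmul : ∀ a b x, lsmul (a * b) x = lsmul a (lsmul b x)
  one_lsmul : ∀ x, lsmul 1 x = x
  lsmul_csmul : ∀ (c : ℂ) a x, lsmul a (c • x) = c • lsmul a x
  csmul_lsmul : ∀ (c : ℂ) a x, lsmul (c • a) x = c • lsmul a x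
  rsmul_dist : ∀ x y b, rsmul (x + y) b = rsmul x b + rsmul y b
  rsmul_add : ∀ x a b, rsmul x (a + b) = rsmul x a + rsmul x b
  rsmul_mul : ∀ x a b, rsmul (rsmul x a) b = rsmul x (a * b)
  rsmul_one : ∀ x, rsmul x 1 = x
  rsmul_csmul : ∀ (c : ℂ) x b, rsmul (c • x) b = c • rsmul x b
  rsmul_calg : ∀ (c : ℂ) x b, rsmul x (c • b) = c • rsmul x b
  lsmul_rsmul : ∀ a x b, lsmul a (rsmul x b) = rsmul (lsmul a x) b
  innerR_add_right : ∀ x y z, innerR x (y + z) = innerR x y + innerR x z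
  innerR_rsmul_right : ∀ x y b, innerR x (rsmul y b) = innerR x y * b
  innerR_conj_symm : ∀ x y, innerR y x = star (innerR x y)
  innerR_csmul_right : ∀ (c : ℂ) x y, innerR x (c • y) = c • innerR x y
  innerR_self_pos : ∀ x, ∃ b, innerR x x = star b * b
  innerR_self_definite : ∀ x, innerR x x = 0 → x = 0
  innerL_add_left : ∀ x y z, innerL (x + y) z = innerL x z + innerL y z
  innerL_lsmul_left : ∀ a x y, innerL (lsmul a x) y = a * innerL x y
  innerL_conj_symm : ∀ x y, innerL y x = star (innerL x y)
  innerL_csmul_left : ∀ (c : ℂ) x y, innerL (c • x) y = c • innerL x y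
  innerL_self_pos : ∀ x, ∃ a, innerL x x = star a * a
  innerL_self_definite : ∀ x, innerL x x = 0 → x = 0
  innerR_lsmul : ∀ a x y, innerR x (lsmul a y) = innerR (lsmul (star a) x) y
  innerL_rsmul : ∀ x y b, innerL (rsmul x b) y = innerL x (rsmul y (star b))

/-- An imprimitivity (equivalence) Hilbert C*-bimodule over `A` and `B`: a
pre-Hilbert C*-bimodule that is full as a left and as a right Hilbert C*-module,
satisfies the imprimitivity condition `⟨x,y⟩_A·z = x·⟨y,z⟩_B`, and is complete
(for the common norm induced by the inner products). -/
structure ImprimitivityBimodule (A B M : Type*) [CStarAlgebra A] [CStarAlgebra B]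
    [AddCommGroup M] [Module ℂ M] extends PreHilbertBimodule A B M where
  imprimitivity : ∀ x y z, lsmul (innerL x y) z = rsmul x (innerR y z)
  fullL : closure (Submodule.span ℂ {a : A | ∃ x y : M, a = innerL x y} : Set A)
      = Set.univ
  fullR : closure (Submodule.span ℂ {b : B | ∃ x y : M, b = innerR x y} : Set B)
      = Set.univ
  complete : ∀ f : ℕ → M,
    (∀ ε > 0, ∃ N, ∀ m ≥ N, ∀ n ≥ N,
      ‖innerR (f m - f n) (f m - f n)‖ < ε) →
    ∃ x, ∀ ε > 0, ∃ N, ∀ n ≥ N, ‖innerR (f n - x) (f n - x)‖ < ε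

/-!
Fix the frame `w, z` with `∑ ⟨w_j, z_j⟩_B = 1`. Commutativity of `A` and the imprimitivity
condition give `x·⟨y, u⟩_B = u·⟨y, ∑ z_j·⟨w_j, x⟩_B⟩_B`; pairing with `y` shows that
`d = x - ∑ z_j·⟨w_j, x⟩_B` satisfies `⟨d, d⟩_B² = 0`, so `d = 0` because a commutative
C⋆-algebra has no nonzero nilpotents. Hence `x·⟨y, u⟩_B = u·⟨y, x⟩_B`, which yields
`a·x = x·φ(a)` and `⟨x, y⟩_B = φ⟨y, x⟩_A` for the injective map `φ(a) = ∑ ⟨w_j, a·z_j⟩_B`.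
So the right-hand structure is the left-hand one transported along `φ`, and every quotient
statement reduces to one about `I`. The only analytic input is definiteness: `⟨x, x⟩_A ∈ I`
forces `⟨x, w_j⟩_A ∈ I`, since `⟨x, w_j⟩_A^* ⟨x, w_j⟩_A = ⟨x, x⟩_A ⟨w_j, w_j⟩_A` and a closed
ideal of `C(X)` is determined by its zero set; then `x = ∑ ⟨x, w_j⟩_A·z_j ∈ IM`.
-/

theorem ContinuousMap.mem_of_star_mul_self_mem {X 𝕜 : Type*} [TopologicalSpace X]
    [CompactSpace X] [T2Space X] [RCLike 𝕜] {I : Ideal C(X, 𝕜)}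
    (hI : IsClosed (I : Set C(X, 𝕜))) {f : C(X, 𝕜)} (hf : star f * f ∈ I) : f ∈ I := by
  rw [← idealOfSet_ofIdeal_isClosed hI, mem_idealOfSet]
  intro x hx
  rw [Set.mem_compl_iff, notMem_setOfIdeal] at hx
  simpa using hx hf

open WeakDual in
theorem Ideal.mem_of_star_mul_self_mem {A : Type*} [CommCStarAlgebra A] {I : Ideal A}
    (hI : IsClosed (I : Set A)) {a : A} (ha : star a * a ∈ I) : a ∈ I := by
  let Φ := gelfandStarTransform A
  have hJ : IsClosed ((I.comap Φ.symm : Ideal _) : Set C(characterSpace ℂ A, ℂ)) :=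
    hI.preimage (StarAlgEquiv.isometry Φ.symm).continuous
  simpa using ContinuousMap.mem_of_star_mul_self_mem hJ (f := Φ a)
    (by rwa [Ideal.mem_comap, ← map_star, ← map_mul, StarAlgEquiv.symm_apply_apply])

theorem CommCStarAlgebra.eq_zero_of_mul_self_eq_zero {A : Type*} [CommCStarAlgebra A] {a : A}
    (h : a * a = 0) : a = 0 := by
  have : star (star a * a) * (star a * a) = 0 := by
    rw [star_mul, star_star, mul_mul_mul_comm, ← star_mul, h, star_zero, zero_mul]
  rwa [CStarRing.star_mul_self_eq_zero_iff, CStarRing.star_mul_self_eq_zero_iff] at this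

namespace PreHilbertBimodule

section

variable {A B M : Type*} [CStarAlgebra A] [CStarAlgebra B] [AddCommGroup M] [Module ℂ M]
  (H : PreHilbertBimodule A B M)

noncomputable def lsmulₗ : A →ₗ[ℂ] M →ₗ[ℂ] M :=
  LinearMap.mk₂ ℂ H.lsmul H.add_lsmul H.csmul_lsmul H.lsmul_dist H.lsmul_csmul

noncomputable def rsmulₗ : M →ₗ[ℂ] B →ₗ[ℂ] M :=
  LinearMap.mk₂ ℂ H.rsmul H.rsmul_dist H.rsmul_csmul H.rsmul_add H.rsmul_calg

def innerRₗ (x : M) : M →ₗ[ℂ] B where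
  toFun := H.innerR x
  map_add' := H.innerR_add_right x
  map_smul' c y := H.innerR_csmul_right c x y

def innerLₗ (y : M) : M →ₗ[ℂ] A where
  toFun x := H.innerL x y
  map_add' x x' := H.innerL_add_left x x' y
  map_smul' c x := H.innerL_csmul_left c x y

theorem lsmul_sub (a : A) (x y : M) : H.lsmul a (x - y) = H.lsmul a x - H.lsmul a y :=
  (H.lsmulₗ a).map_sub x y

theorem sub_lsmul (a a' : A) (x : M) : H.lsmul (a - a') x = H.lsmul a x - H.lsmul a' x :=
  LinearMap.map_sub₂ H.lsmulₗ a a' x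

theorem lsmul_sum {ι : Type*} (a : A) (s : Finset ι) (f : ι → M) :
    H.lsmul a (∑ j ∈ s, f j) = ∑ j ∈ s, H.lsmul a (f j) :=
  map_sum (H.lsmulₗ a) f s

theorem sum_lsmul {ι : Type*} (s : Finset ι) (f : ι → A) (x : M) :
    H.lsmul (∑ j ∈ s, f j) x = ∑ j ∈ s, H.lsmul (f j) x :=
  map_sum (H.lsmulₗ.flip x) f s

theorem rsmul_zero (x : M) : H.rsmul x 0 = 0 :=
  (H.rsmulₗ x).map_zero

theorem rsmul_sub (x : M) (b b' : B) : H.rsmul x (b - b') = H.rsmul x b - H.rsmul x b' :=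
  (H.rsmulₗ x).map_sub b b'

theorem sub_rsmul (x x' : M) (b : B) : H.rsmul (x - x') b = H.rsmul x b - H.rsmul x' b :=
  LinearMap.map_sub₂ H.rsmulₗ x x' b

theorem rsmul_sum {ι : Type*} (x : M) (s : Finset ι) (f : ι → B) :
    H.rsmul x (∑ j ∈ s, f j) = ∑ j ∈ s, H.rsmul x (f j) :=
  map_sum (H.rsmulₗ x) f s

theorem innerR_sub_right (x y y' : M) : H.innerR x (y - y') = H.innerR x y - H.innerR x y' :=
  (H.innerRₗ x).map_sub y y'

theorem innerR_sum_right {ι : Type*} (x : M) (s : Finset ι) (f : ι → M) :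
    H.innerR x (∑ j ∈ s, f j) = ∑ j ∈ s, H.innerR x (f j) :=
  map_sum (H.innerRₗ x) f s

theorem innerL_zero_left (y : M) : H.innerL 0 y = 0 :=
  (H.innerLₗ y).map_zero

theorem innerL_sub_left (x x' y : M) : H.innerL (x - x') y = H.innerL x y - H.innerL x' y :=
  (H.innerLₗ y).map_sub x x'

theorem innerL_sub_right (x y y' : M) : H.innerL x (y - y') = H.innerL x y - H.innerL x y' := by
  rw [H.innerL_conj_symm, innerL_sub_left, star_sub, ← H.innerL_conj_symm,
    ← H.innerL_conj_symm]

theorem innerL_lsmul_right (a : A) (x y : M) :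
    H.innerL x (H.lsmul a y) = H.innerL x y * star a := by
  rw [H.innerL_conj_symm, H.innerL_lsmul_left, star_mul, ← H.innerL_conj_symm]

/-- The canonical isomorphism `φ_M`, written through the frame `w, z`. -/
def canonicalMap {n : ℕ} (w z : Fin n → M) : A →ₗ[ℂ] B where
  toFun a := ∑ j, H.innerR (w j) (H.lsmul a (z j))
  map_add' a a' := by simp only [H.add_lsmul, H.innerR_add_right, Finset.sum_add_distrib]
  map_smul' c a := by
    simp only [H.csmul_lsmul, H.innerR_csmul_right, Finset.smul_sum, RingHom.id_apply]

/-- The submodule `IM`. -/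
def lsmulSpan (I : Submodule ℂ A) : Submodule ℂ M :=
  Submodule.span ℂ {m | ∃ a ∈ I, ∃ x : M, m = H.lsmul a x}

variable {H} {I : Submodule ℂ A}

theorem lsmul_mem_lsmulSpan {a : A} (ha : a ∈ I) (x : M) : H.lsmul a x ∈ H.lsmulSpan I :=
  Submodule.subset_span ⟨a, ha, x, rfl⟩

theorem lsmul_mem_lsmulSpan_of_mem (hI_mul : ∀ a ∈ I, ∀ c : A, c * a ∈ I) (a : A) {m : M}
    (hm : m ∈ H.lsmulSpan I) : H.lsmul a m ∈ H.lsmulSpan I := by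
  refine (Submodule.span_le (p := (H.lsmulSpan I).comap (H.lsmulₗ a))).mpr ?_ hm
  rintro _ ⟨b, hb, x, rfl⟩
  simpa [lsmulₗ, ← H.mul_lsmul] using lsmul_mem_lsmulSpan (hI_mul b hb a) x

theorem rsmul_mem_lsmulSpan_of_mem (b : B) {m : M} (hm : m ∈ H.lsmulSpan I) :
    H.rsmul m b ∈ H.lsmulSpan I := by
  refine (Submodule.span_le (p := (H.lsmulSpan I).comap (H.rsmulₗ.flip b))).mpr ?_ hm
  rintro _ ⟨a, ha, x, rfl⟩
  simpa [rsmulₗ, ← H.lsmul_rsmul] using lsmul_mem_lsmulSpan ha (H.rsmul x b)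

theorem lsmul_sub_lsmul_mem_lsmulSpan (hI_mul : ∀ a ∈ I, ∀ c : A, c * a ∈ I) {a a' : A}
    {x x' : M} (ha : a - a' ∈ I) (hx : x - x' ∈ H.lsmulSpan I) :
    H.lsmul a x - H.lsmul a' x' ∈ H.lsmulSpan I := by
  have : H.lsmul a x - H.lsmul a' x' = H.lsmul (a - a') x + H.lsmul a' (x - x') := by
    rw [sub_lsmul, lsmul_sub]; abel
  rw [this]
  exact add_mem (lsmul_mem_lsmulSpan ha x) (lsmul_mem_lsmulSpan_of_mem hI_mul a' hx)

end

section CommLeft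

variable {A B M : Type*} [CommCStarAlgebra A] [CStarAlgebra B] [AddCommGroup M] [Module ℂ M]
  {H : PreHilbertBimodule A B M} {I : Submodule ℂ A}

theorem innerL_mem_of_left_mem_lsmulSpan (hI_mul : ∀ a ∈ I, ∀ c : A, c * a ∈ I) {m : M}
    (hm : m ∈ H.lsmulSpan I) (y : M) : H.innerL m y ∈ I := by
  refine (Submodule.span_le (p := I.comap (H.innerLₗ y))).mpr ?_ hm
  rintro _ ⟨a, ha, x, rfl⟩
  simpa [innerLₗ, H.innerL_lsmul_left, mul_comm a] using hI_mul a ha (H.innerL x y)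

theorem innerL_mem_of_right_mem_lsmulSpan (hI_mul : ∀ a ∈ I, ∀ c : A, c * a ∈ I)
    (hI_star : ∀ a ∈ I, star a ∈ I) (x : M) {m : M} (hm : m ∈ H.lsmulSpan I) :
    H.innerL x m ∈ I := by
  rw [H.innerL_conj_symm]
  exact hI_star _ (innerL_mem_of_left_mem_lsmulSpan hI_mul hm x)

theorem innerL_sub_innerL_mem (hI_mul : ∀ a ∈ I, ∀ c : A, c * a ∈ I)
    (hI_star : ∀ a ∈ I, star a ∈ I) {x x' y y' : M} (hx : x - x' ∈ H.lsmulSpan I)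
    (hy : y - y' ∈ H.lsmulSpan I) : H.innerL x y - H.innerL x' y' ∈ I := by
  have : H.innerL x y - H.innerL x' y' = H.innerL (x - x') y + H.innerL x' (y - y') := by
    rw [innerL_sub_left, innerL_sub_right]; abel
  rw [this]
  exact add_mem (innerL_mem_of_left_mem_lsmulSpan hI_mul hx y)
    (innerL_mem_of_right_mem_lsmulSpan hI_mul hI_star x' hy)

end CommLeft

end PreHilbertBimodule

namespace ImprimitivityBimodule

open PreHilbertBimodule

variable {A B M : Type*} [AddCommGroup M] [Module ℂ M]

theorem eq_zero_of_forall_lsmul_eq_zero [CStarAlgebra A] [CStarAlgebra B]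
    (H : ImprimitivityBimodule A B M) {a : A} (h : ∀ x, H.lsmul a x = 0) : a = 0 := by
  have hspan : (Submodule.span ℂ {c : A | ∃ x y : M, c = H.innerL x y} : Set A) ⊆
      {c | a * c = 0} := by
    refine (Submodule.span_le (p := LinearMap.ker (LinearMap.mulLeft ℂ a))).mpr ?_
    rintro _ ⟨x, y, rfl⟩
    simp [← H.innerL_lsmul_left, h, innerL_zero_left]
  have hclosed : IsClosed {c : A | a * c = 0} := isClosed_eq (by fun_prop) continuous_const
  have h1 : (1 : A) ∈
      closure (Submodule.span ℂ {c : A | ∃ x y : M, c = H.innerL x y} : Set A) := by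
    rw [H.fullL]; trivial
  simpa using closure_minimal hspan hclosed h1

variable [CommCStarAlgebra A] [CommCStarAlgebra B] (H : ImprimitivityBimodule A B M)
  {n : ℕ} {w z : Fin n → M}

theorem rsmul_innerR_mul_innerR_comm (x y x' y' u : M) :
    H.rsmul x (H.innerR y x' * H.innerR y' u) = H.rsmul x' (H.innerR y' x * H.innerR y u) := by
  have hA : ∀ p q p' q' m, H.lsmul (H.innerL p q) (H.lsmul (H.innerL p' q') m) =
      H.rsmul p (H.innerR q p' * H.innerR q' m) := by
    intro p q p' q' m
    rw [H.imprimitivity, H.imprimitivity, H.innerR_rsmul_right]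
  rw [← hA, ← hA, ← H.mul_lsmul, ← H.mul_lsmul, mul_comm]

theorem rsmul_innerR_eq_rsmul_innerR_sum (hwz : ∑ j, H.innerR (w j) (z j) = 1) (x y u : M) :
    H.rsmul x (H.innerR y u) =
      H.rsmul u (H.innerR y (∑ j, H.rsmul (z j) (H.innerR (w j) x))) := by
  calc H.rsmul x (H.innerR y u)
      = ∑ j, H.rsmul x (H.innerR y u * H.innerR (w j) (z j)) := by
        rw [← rsmul_sum, ← Finset.mul_sum, hwz, mul_one]
    _ = ∑ j, H.rsmul u (H.innerR y (z j) * H.innerR (w j) x) := by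
        simp only [rsmul_innerR_mul_innerR_comm H x y u, mul_comm]
    _ = _ := by
        simp only [innerR_sum_right, H.innerR_rsmul_right, rsmul_sum]

theorem sum_rsmul_innerR (hwz : ∑ j, H.innerR (w j) (z j) = 1) (x : M) :
    ∑ j, H.rsmul (z j) (H.innerR (w j) x) = x := by
  set d := x - ∑ j, H.rsmul (z j) (H.innerR (w j) x)
  have hd : ∀ y u : M, H.innerR y u * H.innerR y d = 0 := by
    intro y u
    have := congrArg (H.innerR y) (rsmul_innerR_eq_rsmul_innerR_sum H hwz x y u)
    rw [H.innerR_rsmul_right, H.innerR_rsmul_right] at this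
    rw [innerR_sub_right, mul_sub, mul_comm, this, sub_self]
  have hdd := CommCStarAlgebra.eq_zero_of_mul_self_eq_zero (hd d d)
  exact (sub_eq_zero.mp (H.innerR_self_definite d hdd)).symm

theorem rsmul_innerR_comm (hwz : ∑ j, H.innerR (w j) (z j) = 1) (x y u : M) :
    H.rsmul x (H.innerR y u) = H.rsmul u (H.innerR y x) := by
  rw [rsmul_innerR_eq_rsmul_innerR_sum H hwz, sum_rsmul_innerR H hwz]

theorem sum_lsmul_innerL (hwz : ∑ j, H.innerR (w j) (z j) = 1) (x : M) :
    ∑ j, H.lsmul (H.innerL x (w j)) (z j) = x := by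
  conv_rhs => rw [← H.rsmul_one x, ← hwz, rsmul_sum]
  simp only [H.imprimitivity]

theorem sum_innerR_rsmul (hwz : ∑ j, H.innerR (w j) (z j) = 1) (b : B) :
    ∑ j, H.innerR (w j) (H.rsmul (z j) b) = b := by
  simp only [H.innerR_rsmul_right, ← Finset.sum_mul, hwz, one_mul]

theorem eq_of_forall_rsmul_eq (hwz : ∑ j, H.innerR (w j) (z j) = 1) {b b' : B}
    (h : ∀ j, H.rsmul (z j) b = H.rsmul (z j) b') : b = b' := by
  rw [← sum_innerR_rsmul H hwz b, ← sum_innerR_rsmul H hwz b']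
  simp only [h]

theorem lsmul_eq_rsmul_canonicalMap (hwz : ∑ j, H.innerR (w j) (z j) = 1) (a : A) (x : M) :
    H.lsmul a x = H.rsmul x (H.canonicalMap w z a) := by
  conv_lhs => rw [← sum_lsmul_innerL H hwz x, lsmul_sum]
  simp only [canonicalMap, LinearMap.coe_mk, AddHom.coe_mk, rsmul_sum, ← H.imprimitivity,
    ← H.mul_lsmul, mul_comm a]

theorem canonicalMap_innerL (hwz : ∑ j, H.innerR (w j) (z j) = 1) (x y : M) :
    H.canonicalMap w z (H.innerL y x) = H.innerR x y := by
  refine eq_of_forall_rsmul_eq H hwz fun j => ?_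
  rw [← lsmul_eq_rsmul_canonicalMap H hwz, H.imprimitivity, rsmul_innerR_comm H hwz]

theorem canonicalMap_injective (hwz : ∑ j, H.innerR (w j) (z j) = 1) :
    Function.Injective (H.canonicalMap w z) := by
  refine (injective_iff_map_eq_zero _).mpr fun a ha =>
    eq_zero_of_forall_lsmul_eq_zero H fun x => ?_
  rw [lsmul_eq_rsmul_canonicalMap H hwz, ha, rsmul_zero]

theorem sum_innerL (hwz : ∑ j, H.innerR (w j) (z j) = 1) : ∑ j, H.innerL (z j) (w j) = 1 := by
  refine sub_eq_zero.mp (eq_zero_of_forall_lsmul_eq_zero H fun x => ?_)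
  rw [sub_lsmul, H.one_lsmul, sum_lsmul]
  simp only [H.imprimitivity, sum_rsmul_innerR H hwz, sub_self]

theorem span_innerL_eq_top (hwz : ∑ j, H.innerR (w j) (z j) = 1) :
    Submodule.span ℂ {a : A | ∃ x y : M, a = H.innerL x y} = ⊤ := by
  refine eq_top_iff.mpr fun a _ => ?_
  rw [← mul_one a, ← sum_innerL H hwz, Finset.mul_sum]
  simp only [← H.innerL_lsmul_left]
  exact Submodule.sum_mem _ fun j _ => Submodule.subset_span ⟨_, _, rfl⟩

theorem span_innerR_eq_top (hwz : ∑ j, H.innerR (w j) (z j) = 1) :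
    Submodule.span ℂ {b : B | ∃ x y : M, b = H.innerR x y} = ⊤ := by
  refine eq_top_iff.mpr fun b _ => ?_
  rw [← sum_innerR_rsmul H hwz b]
  exact Submodule.sum_mem _ fun j _ => Submodule.subset_span ⟨_, _, rfl⟩

theorem innerL_mul_innerL_swap (hwz : ∑ j, H.innerR (w j) (z j) = 1) (x y : M) :
    H.innerL x y * H.innerL y x = H.innerL x x * H.innerL y y := by
  rw [← H.innerL_lsmul_left, H.imprimitivity, H.innerL_rsmul, ← H.innerR_conj_symm,
    rsmul_innerR_comm H hwz, ← H.imprimitivity, innerL_lsmul_right, ← H.innerL_conj_symm]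

variable {I : Submodule ℂ A}

theorem rsmul_mem_lsmulSpan_of_mem_map (hwz : ∑ j, H.innerR (w j) (z j) = 1) (x : M) {b : B}
    (hb : b ∈ I.map (H.canonicalMap w z)) : H.rsmul x b ∈ H.lsmulSpan I := by
  obtain ⟨a, ha, rfl⟩ := hb
  rw [← lsmul_eq_rsmul_canonicalMap H hwz]
  exact lsmul_mem_lsmulSpan ha x

theorem rsmul_sub_rsmul_mem_lsmulSpan (hwz : ∑ j, H.innerR (w j) (z j) = 1) {x x' : M}
    {b b' : B} (hx : x - x' ∈ H.lsmulSpan I) (hb : b - b' ∈ I.map (H.canonicalMap w z)) :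
    H.rsmul x b - H.rsmul x' b' ∈ H.lsmulSpan I := by
  have : H.rsmul x b - H.rsmul x' b' = H.rsmul (x - x') b + H.rsmul x' (b - b') := by
    rw [sub_rsmul, rsmul_sub]; abel
  rw [this]
  exact add_mem (rsmul_mem_lsmulSpan_of_mem b hx) (rsmul_mem_lsmulSpan_of_mem_map H hwz x' hb)

theorem innerR_sub_innerR_mem_map (hwz : ∑ j, H.innerR (w j) (z j) = 1)
    (hI_mul : ∀ a ∈ I, ∀ c : A, c * a ∈ I) (hI_star : ∀ a ∈ I, star a ∈ I) {x x' y y' : M}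
    (hx : x - x' ∈ H.lsmulSpan I) (hy : y - y' ∈ H.lsmulSpan I) :
    H.innerR x y - H.innerR x' y' ∈ I.map (H.canonicalMap w z) := by
  rw [← canonicalMap_innerL H hwz, ← canonicalMap_innerL H hwz, ← map_sub]
  exact Submodule.mem_map_of_mem (innerL_sub_innerL_mem hI_mul hI_star hy hx)

theorem mem_lsmulSpan_of_innerL_self_mem (hwz : ∑ j, H.innerR (w j) (z j) = 1)
    (hI_mul : ∀ a ∈ I, ∀ c : A, c * a ∈ I) (hI_closed : IsClosed (I : Set A)) {x : M}
    (hx : H.innerL x x ∈ I) : x ∈ H.lsmulSpan I := by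
  let J : Ideal A := { I.toAddSubmonoid with smul_mem' := fun c _ ha => hI_mul _ ha c }
  have hcoef : ∀ j, H.innerL x (w j) ∈ I := fun j => by
    refine Ideal.mem_of_star_mul_self_mem (I := J) hI_closed ?_
    rw [← H.innerL_conj_symm, mul_comm, innerL_mul_innerL_swap H hwz]
    exact J.mul_mem_right _ hx
  rw [← sum_lsmul_innerL H hwz x]
  exact Submodule.sum_mem _ fun j _ => lsmul_mem_lsmulSpan (hcoef j) (z j)

theorem mem_lsmulSpan_of_innerR_self_mem_map (hwz : ∑ j, H.innerR (w j) (z j) = 1)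
    (hI_mul : ∀ a ∈ I, ∀ c : A, c * a ∈ I) (hI_closed : IsClosed (I : Set A)) {x : M}
    (hx : H.innerR x x ∈ I.map (H.canonicalMap w z)) : x ∈ H.lsmulSpan I := by
  refine mem_lsmulSpan_of_innerL_self_mem H hwz hI_mul hI_closed ?_
  obtain ⟨a, ha, hφa⟩ := hx
  rwa [← canonicalMap_injective H hwz (hφa.trans (canonicalMap_innerL H hwz x x).symm)]

theorem lsmulSpan_eq_span_rsmul (hwz : ∑ j, H.innerR (w j) (z j) = 1) :
    H.lsmulSpan I =
      Submodule.span ℂ {m | ∃ x : M, ∃ a ∈ I, m = H.rsmul x (H.canonicalMap w z a)} := by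
  simp only [lsmulSpan, lsmul_eq_rsmul_canonicalMap H hwz]
  congr 1
  ext m
  exact ⟨fun ⟨a, ha, x, h⟩ => ⟨x, a, ha, h⟩, fun ⟨x, a, ha, h⟩ => ⟨a, ha, x, h⟩⟩

end ImprimitivityBimodule

open ImprimitivityBimodule PreHilbertBimodule

/-- Let `M` be an imprimitivity Hilbert C*-bimodule over commutative unital
C*-algebras `A` and `B`, with canonical isomorphism `φ_M`, and let `I ⊆ A` be a
closed involutive ideal.  Then `IM = M·φ_M(I)`, and the quotient `M/(IM)` is an
imprimitivity Hilbert C*-bimodule over `A/I` and `B/φ_M(I)`: expressed on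
representatives, the two actions and the two inner products are well defined on the
quotients, the quotient inner products are definite, and the quotient bimodule is
full on both sides. -/
theorem quotient_imprimitivity_bimodule
    {A B M : Type*} [CommCStarAlgebra A] [CommCStarAlgebra B]
    [AddCommGroup M] [Module ℂ M]
    (H : ImprimitivityBimodule A B M)
    {n : ℕ} (w z : Fin n → M)
    (hwz : (∑ j, H.innerR (w j) (z j)) = 1)
    (φ : A → B) (hφ : ∀ a, φ a = ∑ j, H.innerR (w j) (H.lsmul a (z j)))
    (I : Submodule ℂ A)
    (hI_mul : ∀ a ∈ I, ∀ c : A, c * a ∈ I)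
    (hI_star : ∀ a ∈ I, star a ∈ I)
    (hI_closed : IsClosed (I : Set A))
    (IM : Submodule ℂ M)
    (hIM : IM = Submodule.span ℂ {m : M | ∃ a ∈ I, ∃ x : M, m = H.lsmul a x})
    (φI : Submodule ℂ B)
    (hφI : φI = Submodule.span ℂ {b : B | ∃ a ∈ I, b = φ a}) :
    -- `IM = M·φ_M(I)`
    IM = Submodule.span ℂ {m : M | ∃ x : M, ∃ a ∈ I, m = H.rsmul x (φ a)} ∧
    -- the left action of `A/I` is well defined on `M/(IM)`
    (∀ (a a' : A) (x x' : M), a - a' ∈ I → x - x' ∈ IM →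
      H.lsmul a x - H.lsmul a' x' ∈ IM) ∧
    -- the right action of `B/φ_M(I)` is well defined on `M/(IM)`
    (∀ (x x' : M) (b b' : B), x - x' ∈ IM → b - b' ∈ φI →
      H.rsmul x b - H.rsmul x' b' ∈ IM) ∧
    -- the `A/I`-valued inner product is well defined on `M/(IM)`
    (∀ x x' y y' : M, x - x' ∈ IM → y - y' ∈ IM →
      H.innerL x y - H.innerL x' y' ∈ I) ∧
    -- the `B/φ_M(I)`-valued inner product is well defined on `M/(IM)`
    (∀ x x' y y' : M, x - x' ∈ IM → y - y' ∈ IM →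
      H.innerR x y - H.innerR x' y' ∈ φI) ∧
    -- definiteness of the quotient inner products
    (∀ x : M, H.innerL x x ∈ I → x ∈ IM) ∧
    (∀ x : M, H.innerR x x ∈ φI → x ∈ IM) ∧
    -- fullness of the quotient bimodule on both sides
    Submodule.span ℂ {a : A | ∃ x y : M, a = H.innerL x y} ⊔ I = ⊤ ∧
    Submodule.span ℂ {b : B | ∃ x y : M, b = H.innerR x y} ⊔ φI = ⊤ := by
  obtain rfl : φ = H.canonicalMap w z := funext hφ
  have hφI_map : φI = I.map (H.canonicalMap w z) := by
    have : {b : B | ∃ a ∈ I, b = H.canonicalMap w z a} = H.canonicalMap w z '' I := by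
      ext; simp [eq_comm]
    rw [hφI, this, Submodule.span_image, Submodule.span_eq]
  subst hIM hφI_map
  refine ⟨lsmulSpan_eq_span_rsmul H hwz,
    fun _ _ _ _ => lsmul_sub_lsmul_mem_lsmulSpan hI_mul,
    fun _ _ _ _ => rsmul_sub_rsmul_mem_lsmulSpan H hwz,
    fun _ _ _ _ => innerL_sub_innerL_mem hI_mul hI_star,
    fun _ _ _ _ => innerR_sub_innerR_mem_map H hwz hI_mul hI_star,
    fun _ => mem_lsmulSpan_of_innerL_self_mem H hwz hI_mul hI_closed,
    fun _ => mem_lsmulSpan_of_innerR_self_mem_map H hwz hI_mul hI_closed, ?_, ?_⟩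
  · rw [span_innerL_eq_top H hwz, top_sup_eq]
  · rw [span_innerR_eq_top H hwz, top_sup_eq]
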